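/- If V = ⟨v_1,…,v_ℓ⟩ is a sequence of moves that can be applied (in order) to a distribution μ, then Vμ ⪯ V̄μ, where V̄ is the corresponding sequence of extreme moves. -/

import Mathlib

/-- The total mass of `μ` on a set `A` of positions. -/
noncomputable def mass (μ : ℝ →₀ ℝ) (A : Set ℝ) : ℝ :=
  ∑ x ∈ μ.support, Set.indicator A μ x

/-- The `j`-th moment of a finitely supported mass function. -/
noncomputable def moment (j : ℕ) (μ : ℝ →₀ ℝ) : ℝ :=
  ∑ x ∈ μ.support, μ x * x ^ j

/-- The spread `S[μ] = Σ_{i<j} m_i m_j |x_i - x_j| = (1/2)·Σ_{x,y} μ(x) μ(y) |x - y|`. -/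
noncomputable def spread (μ : ℝ →₀ ℝ) : ℝ :=
  (1 / 2) * ∑ x ∈ μ.support, ∑ y ∈ μ.support, μ x * μ y * |x - y|

/-- A distribution: finitely supported, nonnegative, not identically zero. -/
def IsDistribution (μ : ℝ →₀ ℝ) : Prop :=
  (∀ x, 0 ≤ μ x) ∧ μ ≠ 0

/-- A move `([a, a+1], δ)`: a signed distribution `δ` supported in `[a, a+1]`
with vanishing total mass and first moment. -/
structure Move where
  a : ℝ
  δ : ℝ →₀ ℝ
  supp_subset : ∀ x, δ x ≠ 0 → a ≤ x ∧ x ≤ a + 1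
  m0 : moment 0 δ = 0
  m1 : moment 1 δ = 0

/-- The center of a move. -/
noncomputable def Move.center (v : Move) : ℝ := v.a + 1 / 2

/-- `μ 0, μ 1, …, μ ℓ` is a sequence of distributions obtained by applying the
moves `v 0, …, v (ℓ-1)` in order (each move applicable, i.e. each result is a
distribution). -/
def IsMoveSeq (ℓ : ℕ) (v : ℕ → Move) (μ : ℕ → ℝ →₀ ℝ) : Prop :=
  (∀ i ≤ ℓ, IsDistribution (μ i)) ∧ ∀ i < ℓ, μ (i + 1) = μ i + (v i).δ

/-- `μ_max(A) = max_{0 ≤ i ≤ ℓ} μ_i(A)`. -/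
noncomputable def muMax (ℓ : ℕ) (μ : ℕ → ℝ →₀ ℝ) (A : Set ℝ) : ℝ :=
  (Finset.range (ℓ + 1)).sup' (Finset.nonempty_range_iff.mpr (Nat.succ_ne_zero ℓ))
    (fun i => mass (μ i) A)

open scoped Classical in
/-- The number of moves among `v 0, …, v (ℓ-1)` whose center lies in `(a, ∞)`. -/
noncomputable def movesBeyond (ℓ : ℕ) (v : ℕ → Move) (a : ℝ) : ℕ :=
  ((Finset.range ℓ).filter (fun i => a < (v i).center)).card

/-- A sequence of moves is weight-constrained (w.r.t. the generated sequence of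
distributions) if for every `a` the number of moves centered in `(a, ∞)` is at
most `μ_max{x > a}`. -/
def WeightConstrained (ℓ : ℕ) (v : ℕ → Move) (μ : ℕ → ℝ →₀ ℝ) : Prop :=
  ∀ a : ℝ, (movesBeyond ℓ v a : ℝ) ≤ muMax ℓ μ {x | a < x}

/-- `μ'` is a basic split of `μ`: one point mass `(x, μ x)` of `μ` is replaced by
finitely many point masses of positive mass with total mass `μ x` and center of
mass at `x`, the remaining point masses being unchanged. -/
def BasicSplit (μ μ' : ℝ →₀ ℝ) : Prop :=
  ∃ (x : ℝ) (ν : ℝ →₀ ℝ), 0 < μ x ∧ (∀ y, 0 ≤ ν y) ∧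
    moment 0 ν = μ x ∧ moment 1 ν = μ x * x ∧ μ' = μ.erase x + ν

/-- `μ ⪯ μ'` : `μ'` is obtained from `μ` by finitely many basic splits. -/
def Splits (μ μ' : ℝ →₀ ℝ) : Prop := Relation.ReflTransGen BasicSplit μ μ'

/-- `ν` is the result of the extreme move on `[a, b]` applied to `μ`: `ν` agrees
with `μ` outside `[a, b]`, vanishes on `(a, b)`, and has the same total mass and
first moment as `μ` (so all mass in `[a, b]` is moved to the endpoints). -/
def IsExtremeMoveOn (a b : ℝ) (μ ν : ℝ →₀ ℝ) : Prop :=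
  (∀ x, x ∉ Set.Icc a b → ν x = μ x) ∧
  (∀ x, x ∈ Set.Ioo a b → ν x = 0) ∧
  moment 0 ν = moment 0 μ ∧ moment 1 ν = moment 1 μ

/-!
The extreme move on `[a, b]` is linear in the distribution: it fixes point masses outside
`(a, b)` and sends a unit mass at `x ∈ (a, b)` to the two-point distribution on `{a, b}` with
barycenter `x`. Every distribution splits into its extreme image, and extreme moves preserve `⪯`.
A move on `[a, b]` changes neither the mass outside `[a, b]` nor the first two moments, so
`v̄ (v μ) = v̄ μ`, and `μᵢ ⪯ νᵢ` propagates as `v μᵢ ⪯ v̄ μᵢ ⪯ v̄ νᵢ`.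
-/

open Finsupp Set

infix:50 " ⪯ " => Splits

section Moments

variable {f : ℝ →₀ ℝ}

lemma moment_eq_linearCombination (j : ℕ) (f : ℝ →₀ ℝ) :
    moment j f = linearCombination ℝ (· ^ j) f := by
  simp [moment, linearCombination_apply, Finsupp.sum]

lemma moment_add (j : ℕ) (f g : ℝ →₀ ℝ) : moment j (f + g) = moment j f + moment j g := by
  simp only [moment_eq_linearCombination, map_add]

lemma moment_sub (j : ℕ) (f g : ℝ →₀ ℝ) : moment j (f - g) = moment j f - moment j g := by
  simp only [moment_eq_linearCombination, map_sub]

lemma moment_smul (j : ℕ) (c : ℝ) (f : ℝ →₀ ℝ) :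
    moment j (c • f) = c * moment j f := by
  simp only [moment_eq_linearCombination, map_smul, smul_eq_mul]

lemma moment_single (j : ℕ) (x m : ℝ) : moment j (single x m) = m * x ^ j := by
  simp [moment_eq_linearCombination]

lemma moment_zero_nonneg (hf : 0 ≤ f) : 0 ≤ moment 0 f :=
  Finset.sum_nonneg fun x _ => by simpa using hf x

lemma eq_zero_of_moment_zero_eq_zero (hf : 0 ≤ f) (h : moment 0 f = 0) : f = 0 := by
  ext x
  by_contra hx
  have := (Finset.sum_eq_zero_iff_of_nonneg fun y _ => by simpa using hf y).mp h x
    (mem_support_iff.mpr hx)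
  simp_all

lemma exists_mem_moment_one_eq {s : Set ℝ} (hs : Convex ℝ s) (hne : s.Nonempty) (hf : 0 ≤ f)
    (hsupp : ↑f.support ⊆ s) : ∃ p ∈ s, moment 1 f = moment 0 f * p := by
  rcases (moment_zero_nonneg hf).eq_or_lt with h0 | h0
  · obtain ⟨p, hp⟩ := hne
    refine ⟨p, hp, ?_⟩
    rw [← h0, eq_zero_of_moment_zero_eq_zero hf h0.symm]
    simp [moment]
  · have hsum : moment 0 f = ∑ x ∈ f.support, f x := by simp [moment]
    refine ⟨f.support.centerMass f id,
      hs.centerMass_mem (fun x _ => hf x) (hsum ▸ h0) fun x hx => hsupp hx, ?_⟩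
    rw [Finset.centerMass, hsum, smul_eq_mul, mul_inv_cancel_left₀ (hsum ▸ h0.ne')]
    simp [moment]

end Moments

section Splits

variable {f f' g g' : ℝ →₀ ℝ}

lemma BasicSplit.nonneg (h : BasicSplit f f') (hf : 0 ≤ f) : 0 ≤ f' := by
  obtain ⟨x, ν, -, hν, -, -, rfl⟩ := h
  intro y
  simp only [coe_add, coe_zero, Pi.add_apply, Pi.zero_apply, erase_apply]
  split_ifs
  · simpa using hν y
  · exact add_nonneg (hf y) (hν y)

lemma Splits.nonneg (h : f ⪯ f') (hf : 0 ≤ f) : 0 ≤ f' := by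
  induction h with
  | refl => exact hf
  | tail _ hstep ih => exact hstep.nonneg ih

@[refl] lemma Splits.refl (f : ℝ →₀ ℝ) : f ⪯ f := Relation.ReflTransGen.refl

lemma Splits.trans {f'' : ℝ →₀ ℝ} (h : f ⪯ f') (h' : f' ⪯ f'') : f ⪯ f'' :=
  Relation.ReflTransGen.trans h h'

instance : Trans Splits Splits Splits := ⟨Splits.trans⟩

lemma BasicSplit.add_left (hg : 0 ≤ g) (h : BasicSplit f f') : BasicSplit (g + f) (g + f') := by
  obtain ⟨x, ν, hx, hν, h0, h1, rfl⟩ := h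
  refine ⟨x, ν + single x (g x), ?_, ?_, ?_, ?_, ?_⟩
  · simpa using add_pos_of_nonneg_of_pos (hg x) hx
  · exact fun y => add_nonneg (hν y) (single_nonneg.mpr (hg x) y)
  · rw [moment_add, moment_single, h0]; simp [add_comm]
  · rw [moment_add, moment_single, h1]; simp; ring
  · rw [erase_add]
    nth_rewrite 1 [← erase_add_single x g]
    abel

lemma Splits.add_left (hg : 0 ≤ g) (h : f ⪯ f') : g + f ⪯ g + f' :=
  h.lift (g + ·) fun _ _ => BasicSplit.add_left hg

lemma Splits.add_right (hg : 0 ≤ g) (h : f ⪯ f') : f + g ⪯ f' + g := by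
  simpa only [add_comm _ g] using h.add_left hg

lemma Splits.add (hf : 0 ≤ f) (hg : 0 ≤ g) (hff' : f ⪯ f') (hgg' : g ⪯ g') :
    f + g ⪯ f' + g' :=
  (hff'.add_right hg).trans (hgg'.add_left (hff'.nonneg hf))

lemma Splits.finset_sum {ι : Type*} {s : Finset ι} {F G : ι → ℝ →₀ ℝ}
    (hF : ∀ i ∈ s, 0 ≤ F i) (h : ∀ i ∈ s, F i ⪯ G i) :
    ∑ i ∈ s, F i ⪯ ∑ i ∈ s, G i := by
  classical
  induction s using Finset.induction with
  | empty => simpa using Splits.refl 0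
  | insert i s hi ih =>
    rw [Finset.sum_insert hi, Finset.sum_insert hi]
    have hF' : ∀ j ∈ s, 0 ≤ F j := fun j hj => hF j (Finset.mem_insert_of_mem hj)
    exact Splits.add (hF i (s.mem_insert_self i)) (Finset.sum_nonneg hF')
      (h i (s.mem_insert_self i)) (ih hF' fun j hj => h j (Finset.mem_insert_of_mem hj))

lemma splits_single {x m : ℝ} {ν : ℝ →₀ ℝ} (hν : 0 ≤ ν) (h0 : moment 0 ν = m)
    (h1 : moment 1 ν = m * x) : single x m ⪯ ν := by
  rcases (h0 ▸ moment_zero_nonneg hν).eq_or_lt with hm | hm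
  · rw [← hm, single_zero, eq_zero_of_moment_zero_eq_zero hν (h0.trans hm.symm)]
  · exact Relation.ReflTransGen.single ⟨x, ν, by simpa using hm, hν, by simpa using h0,
      by simpa using h1, by simp⟩

end Splits

section ExtremeMove

variable {a b : ℝ} {f g : ℝ →₀ ℝ}

noncomputable def extremeKernel (a b x : ℝ) : ℝ →₀ ℝ :=
  if x ∈ Ioo a b then single a ((b - x) / (b - a)) + single b ((x - a) / (b - a))
  else single x 1

noncomputable def extremeMove (a b : ℝ) : (ℝ →₀ ℝ) →ₗ[ℝ] ℝ →₀ ℝ :=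
  linearCombination ℝ (extremeKernel a b)

lemma extremeKernel_nonneg (a b x : ℝ) : 0 ≤ extremeKernel a b x := by
  unfold extremeKernel
  split_ifs with hx
  · have hab : 0 < b - a := sub_pos.mpr (hx.1.trans hx.2)
    exact add_nonneg (single_nonneg.mpr (div_nonneg (sub_pos.mpr hx.2).le hab.le))
      (single_nonneg.mpr (div_nonneg (sub_pos.mpr hx.1).le hab.le))
  · exact single_nonneg.mpr zero_le_one

lemma moment_extremeKernel {j : ℕ} (hj : j ≤ 1) (a b x : ℝ) :
    moment j (extremeKernel a b x) = x ^ j := by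
  unfold extremeKernel
  split_ifs with hx
  · have hab : b - a ≠ 0 := (sub_pos.mpr (hx.1.trans hx.2)).ne'
    rw [moment_add, moment_single, moment_single]
    interval_cases j <;> field_simp <;> ring
  · rw [moment_single, one_mul]

lemma extremeKernel_apply_of_mem_Ioo {y : ℝ} (hy : y ∈ Ioo a b) (x : ℝ) :
    extremeKernel a b x y = 0 := by
  unfold extremeKernel
  split_ifs with hx
  · simp [hy.1.ne, hy.2.ne']
  · simp [show x ≠ y by rintro rfl; exact hx hy]

lemma extremeKernel_apply_of_notMem_Icc {y : ℝ} (hy : y ∉ Icc a b) (x : ℝ) :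
    extremeKernel a b x y = single x 1 y := by
  unfold extremeKernel
  split_ifs with hx
  · have hxy : x ≠ y := by rintro rfl; exact hy (Ioo_subset_Icc_self hx)
    have hay : a ≠ y := by rintro rfl; exact hy (left_mem_Icc.mpr (hx.1.trans hx.2).le)
    have hby : b ≠ y := by rintro rfl; exact hy (right_mem_Icc.mpr (hx.1.trans hx.2).le)
    simp [hxy, hay, hby]
  · rfl

lemma extremeMove_single (a b x m : ℝ) :
    extremeMove a b (single x m) = m • extremeKernel a b x :=
  linearCombination_single _ _ _

lemma extremeMove_apply (a b : ℝ) (f : ℝ →₀ ℝ) (y : ℝ) :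
    extremeMove a b f y = f.sum fun x m => m * extremeKernel a b x y := by
  simp [extremeMove, linearCombination_apply, Finsupp.sum_apply]

lemma extremeMove_nonneg (hf : 0 ≤ f) : 0 ≤ extremeMove a b f := fun y => by
  rw [extremeMove_apply]
  exact Finset.sum_nonneg fun x _ => mul_nonneg (hf x) (extremeKernel_nonneg a b x y)

lemma moment_extremeMove {j : ℕ} (hj : j ≤ 1) (a b : ℝ) (f : ℝ →₀ ℝ) :
    moment j (extremeMove a b f) = moment j f := by
  simp only [moment_eq_linearCombination, extremeMove, apply_linearCombination]
  congr 2
  ext x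
  simpa [moment_eq_linearCombination] using moment_extremeKernel hj a b x

lemma isExtremeMoveOn_extremeMove (a b : ℝ) (f : ℝ →₀ ℝ) :
    IsExtremeMoveOn a b f (extremeMove a b f) := by
  refine ⟨fun y hy => ?_, fun y hy => ?_, moment_extremeMove zero_le_one a b f,
    moment_extremeMove le_rfl a b f⟩
  · simp [extremeMove_apply, extremeKernel_apply_of_notMem_Icc hy, single_apply, eq_comm]
  · simp [extremeMove_apply, extremeKernel_apply_of_mem_Ioo hy]

lemma eq_zero_of_moment_eq_zero_of_support_subset_pair (hab : a ≠ b)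
    (hd : ∀ y, y ≠ a → y ≠ b → g y = 0) (h0 : moment 0 g = 0) (h1 : moment 1 g = 0) :
    g = 0 := by
  have hg : g = single a (g a) + single b (g b) := by
    ext y
    by_cases hya : y = a
    · simp [hya, hab]
    by_cases hyb : y = b
    · simp [hyb, Ne.symm hab]
    · simp [hd y hya hyb, Ne.symm hya, Ne.symm hyb]
  rw [hg, moment_add, moment_single, moment_single] at h0 h1
  have hga : g a = 0 := by
    have : g a * (a - b) = 0 := by linear_combination h1 - b * h0
    simpa [sub_ne_zero.mpr hab] using this
  have hgb : g b = 0 := by simpa [hga] using h0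
  rw [hg, hga, hgb, single_zero, single_zero, add_zero]

lemma IsExtremeMoveOn.eq_extremeMove (hab : a < b) (h : IsExtremeMoveOn a b f g) :
    g = extremeMove a b f := by
  have h' := isExtremeMoveOn_extremeMove a b f
  refine sub_eq_zero.mp (eq_zero_of_moment_eq_zero_of_support_subset_pair hab.ne
    (fun y hya hyb => ?_) ?_ ?_)
  · by_cases hy : y ∈ Icc a b
    · have hy' : y ∈ Ioo a b := ⟨lt_of_le_of_ne hy.1 (Ne.symm hya), lt_of_le_of_ne hy.2 hyb⟩
      simp [h.2.1 y hy', h'.2.1 y hy']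
    · simp [h.1 y hy, h'.1 y hy]
  · rw [moment_sub, h.2.2.1, h'.2.2.1, sub_self]
  · rw [moment_sub, h.2.2.2, h'.2.2.2, sub_self]

lemma IsExtremeMoveOn.add_move (v : Move) (h : IsExtremeMoveOn v.a (v.a + 1) f g) :
    IsExtremeMoveOn v.a (v.a + 1) (f + v.δ) g := by
  refine ⟨fun y hy => ?_, h.2.1, ?_, ?_⟩
  · have : v.δ y = 0 := by
      by_contra hδ
      exact hy (v.supp_subset y hδ)
    rw [h.1 y hy, coe_add, Pi.add_apply, this, add_zero]
  · rw [moment_add, v.m0, add_zero, h.2.2.1]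
  · rw [moment_add, v.m1, add_zero, h.2.2.2]

end ExtremeMove

section SplitsExtremeMove

variable {a b : ℝ} {f f' g R : ℝ →₀ ℝ}

lemma splits_extremeMove (hf : 0 ≤ f) : f ⪯ extremeMove a b f := by
  have hsum : extremeMove a b f = ∑ x ∈ f.support, f x • extremeKernel a b x := by
    simp [extremeMove, linearCombination_apply, Finsupp.sum]
  conv_lhs => rw [← f.sum_single]
  rw [hsum]
  refine Splits.finset_sum (fun x _ => single_nonneg.mpr (hf x)) fun x _ => splits_single
    (smul_nonneg (hf x) (extremeKernel_nonneg a b x)) ?_ ?_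
  · rw [moment_smul, moment_extremeKernel zero_le_one, pow_zero, mul_one]
  · rw [moment_smul, moment_extremeKernel le_rfl, pow_one]

lemma IsExtremeMoveOn.splits (hab : a < b) (hf : 0 ≤ f) (h : IsExtremeMoveOn a b f g) : f ⪯ g :=
  h.eq_extremeMove hab ▸ splits_extremeMove hf

lemma isExtremeMoveOn_single_add_single {p q α β : ℝ} (hpq : p ≤ q)
    (hg : ∀ y ∉ Icc p q, g y = 0) (h0 : moment 0 g = α + β)
    (h1 : moment 1 g = α * p + β * q) :
    IsExtremeMoveOn p q g (single p α + single q β) := by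
  refine ⟨fun y hy => ?_, fun y hy => ?_, ?_, ?_⟩
  · have hp : p ≠ y := by rintro rfl; exact hy (left_mem_Icc.mpr hpq)
    have hq : q ≠ y := by rintro rfl; exact hy (right_mem_Icc.mpr hpq)
    simp [hg y hy, hp, hq]
  · simp [hy.1.ne, hy.2.ne']
  · simp [moment_add, moment_single, h0]
  · simp [moment_add, moment_single, h1]

/-- Both sides split from the two-point distribution carried by the barycenters of the parts of
`R` on either side of the gap `(a, b)`. -/
lemma splits_of_eq_zero_on_Ioo (hab : a < b) (hg : 0 ≤ g) (hg_out : ∀ y ∉ Icc a b, g y = 0)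
    (hR : 0 ≤ R) (hR_in : ∀ y ∈ Ioo a b, R y = 0) (h0 : moment 0 g = moment 0 R)
    (h1 : moment 1 g = moment 1 R) : g ⪯ R := by
  set L := R.filter (· ≤ a)
  set U := R.filter fun y => ¬ y ≤ a
  have hLU : L + U = R := filter_add_filter_not _ _
  have hL : 0 ≤ L := fun y => by simp only [L, filter_apply]; split_ifs; exacts [hR y, le_rfl]
  have hU : 0 ≤ U := fun y => by simp only [U, filter_apply]; split_ifs; exacts [le_rfl, hR y]
  obtain ⟨p, hpa, hp⟩ := exists_mem_moment_one_eq (convex_Iic a) nonempty_Iic hL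
    fun y hy => by
      simp only [L, Finset.mem_coe, support_filter, Finset.mem_filter] at hy
      exact hy.2
  obtain ⟨q, hbq, hq⟩ := exists_mem_moment_one_eq (convex_Ici b) nonempty_Ici hU fun y hy => by
    simp only [U, Finset.mem_coe, support_filter, Finset.mem_filter, mem_support_iff, not_le] at hy
    by_contra hyb
    exact hy.1 (hR_in y ⟨hy.2, not_le.mp hyb⟩)
  have hpq : p ≤ q := hpa.trans (hab.le.trans hbq)
  calc g ⪯ single p (moment 0 L) + single q (moment 0 U) := by
        refine (isExtremeMoveOn_single_add_single hpq (fun y hy => hg_out y ?_) ?_ ?_).splits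
          (hpa.trans_lt (hab.trans_le hbq)) hg
        · exact fun hy' => hy (Icc_subset_Icc hpa hbq hy')
        · rw [h0, ← hLU, moment_add]
        · rw [h1, ← hLU, moment_add, hp, hq]
    _ ⪯ L + U := Splits.add (single_nonneg.mpr (moment_zero_nonneg hL))
        (single_nonneg.mpr (moment_zero_nonneg hU)) (splits_single hL rfl hp)
        (splits_single hU rfl hq)
    _ = R := hLU

lemma splits_extremeMove_single {x m : ℝ} {ν : ℝ →₀ ℝ} (hν : 0 ≤ ν) (h0 : moment 0 ν = m)
    (h1 : moment 1 ν = m * x) : extremeMove a b (single x m) ⪯ extremeMove a b ν := by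
  have hR0 : moment 0 (extremeMove a b ν) = m := (moment_extremeMove zero_le_one a b ν).trans h0
  have hR1 : moment 1 (extremeMove a b ν) = m * x := (moment_extremeMove le_rfl a b ν).trans h1
  have hm : 0 ≤ m := h0 ▸ moment_zero_nonneg hν
  by_cases hx : x ∈ Ioo a b
  · refine splits_of_eq_zero_on_Ioo (hx.1.trans hx.2)
      (extremeMove_nonneg (single_nonneg.mpr hm)) (fun y hy => ?_) (extremeMove_nonneg hν)
      (isExtremeMoveOn_extremeMove a b ν).2.1 ?_ ?_
    · have hxy : x ≠ y := by rintro rfl; exact hy (Ioo_subset_Icc_self hx)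
      simp [extremeMove_single, extremeKernel_apply_of_notMem_Icc hy, hxy]
    · simp [moment_extremeMove, moment_single, hR0]
    · simp [moment_extremeMove, moment_single, hR1]
  · rw [extremeMove_single, extremeKernel, if_neg hx, smul_single_one]
    exact splits_single (extremeMove_nonneg hν) hR0 hR1

lemma BasicSplit.map_extremeMove (hf : 0 ≤ f) (h : BasicSplit f f') :
    extremeMove a b f ⪯ extremeMove a b f' := by
  obtain ⟨x, ν, -, hν, h0, h1, rfl⟩ := h
  have hfx : 0 ≤ f.erase x := fun y => by rw [erase_apply]; split_ifs; exacts [le_rfl, hf y]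
  conv_lhs => rw [← erase_add_single x f]
  rw [map_add, map_add]
  exact (splits_extremeMove_single hν h0 h1).add_left (extremeMove_nonneg hfx)

lemma Splits.map_extremeMove (hf : 0 ≤ f) (h : f ⪯ f') :
    extremeMove a b f ⪯ extremeMove a b f' := by
  induction h with
  | refl => rfl
  | tail hff' hstep ih => exact ih.trans (hstep.map_extremeMove (Splits.nonneg hff' hf))

end SplitsExtremeMove

/-- **Theorem.** If `V = ⟨v 0, …, v (ℓ-1)⟩` is a sequence of moves that can be
applied in order to `μ 0`, generating `μ 0, …, μ ℓ`, and `ν 0, …, ν ℓ` is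
generated from `ν 0 = μ 0` by the corresponding sequence of extreme moves, then
`Vμ ⪯ V̄μ`, i.e. `μ ℓ ⪯ ν ℓ`. -/
theorem moves_split_extreme_seq (ℓ : ℕ) (v : ℕ → Move) (μ ν : ℕ → ℝ →₀ ℝ)
    (hseq : IsMoveSeq ℓ v μ) (hν0 : ν 0 = μ 0)
    (hext : ∀ i < ℓ, IsExtremeMoveOn (v i).a ((v i).a + 1) (ν i) (ν (i + 1))) :
    Splits (μ ℓ) (ν ℓ) := by
  obtain ⟨hdist, hstep⟩ := hseq
  have hμ : ∀ i ≤ ℓ, 0 ≤ μ i := fun i hi => (hdist i hi).1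
  suffices ∀ i ≤ ℓ, μ i ⪯ ν i from this ℓ le_rfl
  intro i
  induction i with
  | zero => exact fun _ => hν0 ▸ Splits.refl _
  | succ n ih =>
    intro hn
    have hn' : n < ℓ := hn
    have hab : (v n).a < (v n).a + 1 := lt_add_one _
    have hμ' := hμ (n + 1) hn
    rw [hstep n hn'] at hμ' ⊢
    calc μ n + (v n).δ ⪯ extremeMove (v n).a ((v n).a + 1) (μ n) :=
          ((isExtremeMoveOn_extremeMove _ _ _).add_move (v n)).splits hab hμ'
      _ ⪯ extremeMove (v n).a ((v n).a + 1) (ν n) := (ih hn'.le).map_extremeMove (hμ n hn'.le)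
      _ = ν (n + 1) := ((hext n hn').eq_extremeMove hab).symm
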